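/- arXiv:2306.15034 — 2 statements merged into one kernel-verified Lean document; each statement's English description precedes it below -/
import Mathlib

section
/- Let A be a finite-dimensional evolution algebra with natural basis B = {e_i}_{i in Λ}. Then the absorption radical of A equals the span of the basis elements corresponding to acyclic vertices: rad(A) = span{e_i : i is an acyclic vertex of Γ(A,B)}. Equivalently, with m = asi(A), the set λ_m(B) is exactly the set of acyclic vertices of Γ(A,B). -/
/-!
For a natural basis the multiplication is commutative and `x * e_j = x_j • e_j²`, so by induction
`annⁿ(A)` is spanned by the `e_i` with `i ∈ λ_n(B)`. At `m = asi(A)` the series has stabilized, and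
a stable term of the series is an absorbing ideal contained in every absorbing submodule, hence it
is `rad(A)`. It remains to identify `λ_m(B)`: every `λ_n(B)` consists of acyclic vertices, because a
cyclic vertex has a cyclic successor; conversely `λ_m = λ_{m+1}` means that `λ_m(B)` contains each
vertex all of whose successors it contains, and on a finite graph such a set contains every acyclic
vertex, by well-founded induction along reachability among acyclic vertices.
-/

open Submodule

section EvolutionPreamble

/-- The set of `k`-th generation descendants of a vertex in a directed graph
given by an edge relation `E`; `Dk E 0 i = {i}`. -/
def Dk {V : Type*} (E : V → V → Prop) : ℕ → V → Set V
  | 0, i => {i}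
  | n + 1, i => {k | ∃ j ∈ Dk E n i, E j k}

/-- A vertex is cyclic if there is a (possibly trivial) path from it to a vertex
lying on a cycle. -/
def IsCyclicVertex {V : Type*} (E : V → V → Prop) (i : V) : Prop :=
  ∃ j, Relation.ReflTransGen E i j ∧ Relation.TransGen E j j

/-- Connectedness of a directed graph: every nontrivial partition of the
vertex set is crossed by an edge (in one direction or the other). -/
def GraphConnected {V : Type*} (E : V → V → Prop) : Prop :=
  ∀ s : Set V, s.Nonempty → sᶜ.Nonempty → ∃ x ∈ s, ∃ y ∈ sᶜ, E x y ∨ E y x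

variable {K : Type*} [Field K] {A : Type*} [NonUnitalNonAssocRing A]
  [Module K A] [SMulCommClass K A A] [IsScalarTower K A A] {ι : Type*}

/-- A basis is natural if distinct basis vectors multiply to zero. -/
def IsNaturalBasis (B : Module.Basis ι K A) : Prop := ∀ i j, i ≠ j → B i * B j = 0

/-- Edge relation of the directed graph `Γ(A,B)` associated to an evolution
algebra `A` with natural basis `B`: `(i,k)` is an edge iff the structure
constant `w_{ik}` is nonzero. -/
def edge (B : Module.Basis ι K A) (i k : ι) : Prop := B.repr (B i * B i) k ≠ 0

/-- First-generation descendants in `Γ(A,B)`. -/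
def D1 (B : Module.Basis ι K A) (i : ι) : Set ι := {k | edge B i k}

/-- The increasing chain of index sets `λ_k(B)`: `λ_0 = ∅`,
`λ_{k+1}(B) = {i : D¹(i) ⊆ λ_k(B)}`.  In particular
`λ_1(B) = {i : e_i² = 0}`. -/
def lam (B : Module.Basis ι K A) : ℕ → Set ι
  | 0 => ∅
  | n + 1 => {i | ∀ k, edge B i k → k ∈ lam B n}

/-- `I` is a (two-sided) ideal. -/
def IsIdeal (I : Submodule K A) : Prop := ∀ x ∈ I, ∀ a : A, x * a ∈ I ∧ a * x ∈ I

/-- The absorption property: `xA ⊆ I` implies `x ∈ I`. -/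
def HasAbsorption (I : Submodule K A) : Prop := ∀ x : A, (∀ a : A, x * a ∈ I) → x ∈ I

/-- The absorption radical: intersection of all ideals with the absorption property. -/
def rad (K : Type*) (A : Type*) [Field K] [NonUnitalNonAssocRing A]
    [Module K A] [SMulCommClass K A A] [IsScalarTower K A A] : Submodule K A :=
  sInf {I : Submodule K A | IsIdeal I ∧ HasAbsorption I}

lemma rad_isIdeal : IsIdeal (rad K A) := by
  intro x hx a
  rw [rad, Submodule.mem_sInf] at hx
  constructor <;>
    · rw [rad, Submodule.mem_sInf]
      intro I hI
      first
        | exact (hI.1 x (hx I hI) a).1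
        | exact (hI.1 x (hx I hI) a).2

/-- The annihilator `ann(A) = {x : xA = Ax = 0}` as a submodule. -/
def annSub (K : Type*) (A : Type*) [Field K] [NonUnitalNonAssocRing A]
    [Module K A] [SMulCommClass K A A] [IsScalarTower K A A] : Submodule K A where
  carrier := {x | ∀ a : A, x * a = 0 ∧ a * x = 0}
  add_mem' := by
    intro x y hx hy a
    constructor
    · rw [add_mul, (hx a).1, (hy a).1, add_zero]
    · rw [mul_add, (hx a).2, (hy a).2, add_zero]
  zero_mem' := by intro a; simp
  smul_mem' := by
    intro c x hx a
    constructor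
    · rw [smul_mul_assoc, (hx a).1, smul_zero]
    · rw [mul_smul_comm, (hx a).2, smul_zero]

/-- The upper annihilating series: `ann⁰(A) = 0`,
`annⁱ⁺¹(A) = {x : xA ∪ Ax ⊆ annⁱ(A)}`. -/
def annSeries (K : Type*) (A : Type*) [Field K] [NonUnitalNonAssocRing A]
    [Module K A] [SMulCommClass K A A] [IsScalarTower K A A] : ℕ → Submodule K A
  | 0 => ⊥
  | n + 1 =>
    { carrier := {x | ∀ a : A, x * a ∈ annSeries K A n ∧ a * x ∈ annSeries K A n}
      add_mem' := by
        intro x y hx hy a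
        constructor
        · rw [add_mul]; exact add_mem (hx a).1 (hy a).1
        · rw [mul_add]; exact add_mem (hx a).2 (hy a).2
      zero_mem' := by intro a; simp
      smul_mem' := by
        intro c x hx a
        constructor
        · rw [smul_mul_assoc]; exact smul_mem _ c (hx a).1
        · rw [mul_smul_comm]; exact smul_mem _ c (hx a).2 }

/-- The annihilator stabilizing index `asi(A)`. -/
noncomputable def asi (K : Type*) (A : Type*) [Field K] [NonUnitalNonAssocRing A]
    [Module K A] [SMulCommClass K A A] [IsScalarTower K A A] : ℕ :=
  sInf {q : ℕ | annSeries K A q = annSeries K A (q + 1)}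

/-- Product of two submodules (span of pairwise products). -/
def smulSub (I J : Submodule K A) : Submodule K A :=
  Submodule.span K (Set.image2 (· * ·) (I : Set A) (J : Set A))

/-- Powers of a subalgebra/ideal, with `N^{k} = Σ_{i+j=k, i,j ≥ 1} Nⁱ Nʲ`. -/
def npow (I : Submodule K A) : ℕ → Submodule K A
  | 0 => ⊥
  | 1 => I
  | n + 2 => ⨆ i : Fin (n + 1), smulSub (npow I (i.1 + 1)) (npow I (n + 1 - i.1))
  termination_by n => n
  decreasing_by
  · have := i.isLt; omega
  · have := i.isLt; omega

/-- `I` is an ideal of the subalgebra `N`. -/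
def IsIdealIn (N I : Submodule K A) : Prop :=
  I ≤ N ∧ ∀ x ∈ I, ∀ a ∈ N, x * a ∈ I ∧ a * x ∈ I

/-- The (sub)algebra `N` is decomposable: it is the direct sum of two nonzero
ideals of `N`. -/
def DecomposableIn (N : Submodule K A) : Prop :=
  ∃ I J : Submodule K A, IsIdealIn N I ∧ IsIdealIn N J ∧ I ≠ ⊥ ∧ J ≠ ⊥ ∧
    I ⊓ J = ⊥ ∧ I ⊔ J = N

/-- Multiplication inside an ideal `N` (an ideal is closed under products). -/
def subMul {N : Submodule K A} (hN : IsIdeal N) (x y : N) : N :=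
  ⟨(x : A) * (y : A), (hN x x.2 y).1⟩

/-- The induced multiplication on the quotient `A ⧸ I` by an ideal `I`. -/
def quotMul (I : Submodule K A) (hI : IsIdeal I) (x y : A ⧸ I) : A ⧸ I :=
  Quotient.liftOn₂ x y (fun a b => Submodule.Quotient.mk (a * b)) (by
    intro a b a' b' ha hb
    have ha' : a - a' ∈ I := (Submodule.quotientRel_def I).mp ha
    have hb' : b - b' ∈ I := (Submodule.quotientRel_def I).mp hb
    refine (Submodule.Quotient.eq I).mpr ?_
    have h : a * b - a' * b' = a * (b - b') + (a - a') * b' := by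
      rw [mul_sub, sub_mul]; abel
    rw [h]
    exact add_mem (hI _ hb' a).2 (hI _ ha' b').1)

/-- Edge relation of the graph associated to the quotient evolution algebra
`A ⧸ I` relative to a basis `C`. -/
def edgeQ {κ : Type*} (I : Submodule K A) (hI : IsIdeal I)
    (C : Module.Basis κ K (A ⧸ I)) (i k : κ) : Prop :=
  C.repr (quotMul I hI (C i) (C i)) k ≠ 0

end EvolutionPreamble

section Graph

variable {V : Type*} {E : V → V → Prop} {i k : V}

lemma IsCyclicVertex.of_rel (hik : E i k) (hk : IsCyclicVertex E k) : IsCyclicVertex E i :=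
  let ⟨j, hkj, hjj⟩ := hk
  ⟨j, .head hik hkj, hjj⟩

lemma IsCyclicVertex.exists_rel (hi : IsCyclicVertex E i) : ∃ k, E i k ∧ IsCyclicVertex E k := by
  obtain ⟨j, hij, hjj⟩ := hi
  rcases hij.cases_head with rfl | ⟨k, hik, hkj⟩
  · obtain ⟨k, hik, hki⟩ := Relation.TransGen.head'_iff.mp hjj
    exact ⟨k, hik, i, hki, hjj⟩
  · exact ⟨k, hik, j, hkj, hjj⟩

lemma setOf_not_isCyclicVertex_subset [Finite V] {S : Set V}
    (hS : ∀ i, (∀ k, E i k → k ∈ S) → i ∈ S) : {i | ¬ IsCyclicVertex E i} ⊆ S := by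
  let r : {i // ¬ IsCyclicVertex E i} → {i // ¬ IsCyclicVertex E i} → Prop :=
    fun k i => Relation.TransGen E i k
  have : IsTrans _ r := ⟨fun _ _ _ h₁ h₂ => h₂.trans h₁⟩
  have : Std.Irrefl r := ⟨fun i h => i.2 ⟨i, .refl, h⟩⟩
  suffices ∀ i : {i // ¬ IsCyclicVertex E i}, i.1 ∈ S from fun i hi => this ⟨i, hi⟩
  intro i
  induction i using (Finite.wellFounded_of_trans_of_irrefl r).induction with
  | _ i ih => exact hS i fun k hik => ih ⟨k, fun hk => i.2 (hk.of_rel hik)⟩ (.single hik)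

end Graph

section EvolutionAlgebra

variable {K : Type*} [Field K] {A : Type*} [NonUnitalNonAssocRing A] [Module K A] {ι : Type*}

lemma basis_mul_self_mem_span_iff (B : Module.Basis ι K A) (j : ι) (s : Set ι) :
    B j * B j ∈ span K (B '' s) ↔ ∀ k, edge B j k → k ∈ s := by
  simp [Module.Basis.mem_span_image, Set.subset_def, edge]

lemma lam_subset_lam_succ (B : Module.Basis ι K A) : ∀ n, lam B n ⊆ lam B (n + 1)
  | 0 => Set.empty_subset _
  | n + 1 => fun _ hi k hk => lam_subset_lam_succ B n (hi k hk)

lemma exists_lam_eq_lam_succ [Finite ι] (B : Module.Basis ι K A) :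
    ∃ n, lam B n = lam B (n + 1) :=
  let ⟨n, hn⟩ := WellFoundedGT.monotone_chain_condition
    ⟨lam B, monotone_nat_of_le_succ (lam_subset_lam_succ B)⟩
  ⟨n, hn (n + 1) n.le_succ⟩

lemma lam_subset_setOf_not_isCyclicVertex (B : Module.Basis ι K A) :
    ∀ n, lam B n ⊆ {i | ¬ IsCyclicVertex (edge B) i}
  | 0 => Set.empty_subset _
  | n + 1 => fun _ hi hcyc =>
    let ⟨k, hik, hk⟩ := hcyc.exists_rel
    lam_subset_setOf_not_isCyclicVertex B n (hi k hik) hk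

lemma lam_eq_setOf_not_isCyclicVertex [Finite ι] (B : Module.Basis ι K A) {n : ℕ}
    (hn : lam B n = lam B (n + 1)) : lam B n = {i | ¬ IsCyclicVertex (edge B) i} :=
  (lam_subset_setOf_not_isCyclicVertex B n).antisymm
    (setOf_not_isCyclicVertex_subset fun _ hi => hn ▸ hi)

variable [SMulCommClass K A A] [IsScalarTower K A A]

lemma forall_mul_mem_iff_forall_mul_basis (B : Module.Basis ι K A) (P : Submodule K A) (x : A) :
    (∀ a, x * a ∈ P) ↔ ∀ j, x * B j ∈ P := by
  refine ⟨fun h j => h (B j), fun h a => ?_⟩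
  have hle : span K (Set.range B) ≤ P.comap (LinearMap.mul K A x) :=
    span_le.mpr (Set.range_subset_iff.mpr h)
  exact hle (B.span_eq ▸ mem_top : a ∈ span K (Set.range B))

lemma annSeries_le_of_hasAbsorption {I : Submodule K A} (hI : HasAbsorption I) :
    ∀ n, annSeries K A n ≤ I
  | 0 => bot_le
  | n + 1 => fun x hx => hI x fun a => annSeries_le_of_hasAbsorption hI n (hx a).1

lemma mem_annSeries_succ_iff_of_comm (hcomm : ∀ x y : A, x * y = y * x) {n : ℕ} {x : A} :
    x ∈ annSeries K A (n + 1) ↔ ∀ a, x * a ∈ annSeries K A n :=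
  ⟨fun h a => (h a).1, fun h a => ⟨h a, hcomm a x ▸ h a⟩⟩

lemma rad_eq_annSeries_of_comm (hcomm : ∀ x y : A, x * y = y * x) {m : ℕ}
    (hm : annSeries K A m = annSeries K A (m + 1)) : rad K A = annSeries K A m := by
  refine le_antisymm (sInf_le ⟨fun x hx a => ?_, fun x hx => ?_⟩)
    (le_sInf fun I hI => annSeries_le_of_hasAbsorption hI.2 m)
  · rw [hm] at hx
    exact hx a
  · rw [hm]
    exact (mem_annSeries_succ_iff_of_comm hcomm).mpr hx

namespace IsNaturalBasis

variable {B : Module.Basis ι K A}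

lemma mul_comm (hB : IsNaturalBasis B) (x y : A) : x * y = y * x := by
  have h : LinearMap.mul K A = (LinearMap.mul K A).flip := by
    refine B.ext fun i => B.ext fun j => ?_
    obtain rfl | hij := eq_or_ne i j
    · rfl
    · simp only [LinearMap.mul_apply', LinearMap.flip_apply, hB i j hij, hB j i hij.symm]
  exact congr($h x y)

lemma mul_basis (hB : IsNaturalBasis B) (x : A) (j : ι) : x * B j = B.repr x j • (B j * B j) := by
  have h : (LinearMap.mul K A).flip (B j) = (B.coord j).smulRight (B j * B j) := by
    refine B.ext fun i => ?_
    obtain rfl | hij := eq_or_ne i j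
    · simp
    · simp [hB i j hij, hij]
  exact congr($h x)

lemma annSeries_eq_span_lam (hB : IsNaturalBasis B) :
    ∀ n, annSeries K A n = span K (B '' lam B n)
  | 0 => by simp [annSeries, lam]
  | n + 1 => by
    ext x
    have hj : ∀ j, x * B j ∈ span K (B '' lam B n) ↔ (B.repr x j ≠ 0 → j ∈ lam B (n + 1)) := by
      intro j
      rw [hB.mul_basis]
      by_cases hxj : B.repr x j = 0
      · simp [hxj]
      · simp only [smul_mem_iff _ hxj, basis_mul_self_mem_span_iff]
        exact ⟨fun h _ => h, fun h => h hxj⟩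
    rw [mem_annSeries_succ_iff_of_comm hB.mul_comm, forall_mul_mem_iff_forall_mul_basis B,
      annSeries_eq_span_lam hB n, Module.Basis.mem_span_image]
    simp only [hj, Set.subset_def, Finset.mem_coe, Finsupp.mem_support_iff]

lemma annSeries_eq_annSeries_succ_iff (hB : IsNaturalBasis B) {n : ℕ} :
    annSeries K A n = annSeries K A (n + 1) ↔ lam B n = lam B (n + 1) := by
  rw [hB.annSeries_eq_span_lam, hB.annSeries_eq_span_lam]
  refine ⟨fun h => Set.ext fun i => ?_, fun h => h ▸ rfl⟩
  rw [← B.self_mem_span_image, h, B.self_mem_span_image]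

end IsNaturalBasis

end EvolutionAlgebra

/-- The absorption radical is spanned by the basis vectors corresponding to the
acyclic vertices of `Γ(A,B)`; equivalently `λ_m(B)` is the set of acyclic
vertices, where `m = asi(A)`. -/
theorem stmt9 {K : Type*} [Field K] {A : Type*} [NonUnitalNonAssocRing A]
    [Module K A] [SMulCommClass K A A] [IsScalarTower K A A]
    {ι : Type*} [Fintype ι] (B : Module.Basis ι K A) (hB : IsNaturalBasis B) :
    rad K A = Submodule.span K (B '' {i | ¬ IsCyclicVertex (edge B) i}) ∧
      lam B (asi K A) = {i | ¬ IsCyclicVertex (edge B) i} := by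
  obtain ⟨N, hN⟩ := exists_lam_eq_lam_succ B
  have hasi : annSeries K A (asi K A) = annSeries K A (asi K A + 1) :=
    Nat.sInf_mem (s := {q | annSeries K A q = annSeries K A (q + 1)})
      ⟨N, hB.annSeries_eq_annSeries_succ_iff.mpr hN⟩
  have hlam : lam B (asi K A) = {i | ¬ IsCyclicVertex (edge B) i} :=
    lam_eq_setOf_not_isCyclicVertex B (hB.annSeries_eq_annSeries_succ_iff.mp hasi)
  refine ⟨?_, hlam⟩
  rw [rad_eq_annSeries_of_comm hB.mul_comm hasi, hB.annSeries_eq_span_lam, hlam]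
end

section
/- Let A be a finite-dimensional evolution algebra and I an ideal of A having the extension property. Then I is nilpotent if and only if I ⊆ rad(A). -/
open Submodule

/-!
If `I = span {e_i : i ∈ Λ'}` for a natural basis `{e_i}`, then for `x ∈ I` the product `x * a`
only depends on the `Λ'`-coordinates of `a`, so `xI ⊆ J` already forces `xA ⊆ J`. Hence, when `J`
has the absorption property, `I^(n+1) ⊆ J` implies `I^n ⊆ J`; descending from `I^k = 0` gives
`I ⊆ J` for every such `J`, i.e. `I ⊆ rad(A)`.

Conversely, an evolution algebra is commutative, so the term `ann^q(A)` at which the upper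
annihilating series stabilizes has the absorption property and contains `rad(A)`; and
`X ⊆ ann^q(A)` gives `X^(2^q) = 0`, because in a product of `2^(j+1)` factors one of the two
outermost factors is itself a product of at least `2^j` of them.
-/

section Powers

variable {K : Type*} [Field K] {A : Type*} [NonUnitalNonAssocRing A] [Module K A]

lemma npow_zero_eq_bot (X : Submodule K A) : npow X 0 = ⊥ := by
  rw [npow]

lemma npow_one_eq_self (X : Submodule K A) : npow X 1 = X := by
  rw [npow]

lemma npow_add_two_le {X N : Submodule K A} {n : ℕ}
    (h : ∀ a b, 0 < a → 0 < b → a + b = n + 2 → ∀ x ∈ npow X a, ∀ y ∈ npow X b, x * y ∈ N) :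
    npow X (n + 2) ≤ N := by
  rw [npow]
  refine iSup_le fun i => ?_
  rw [smulSub, span_le]
  rintro _ ⟨x, hx, y, hy, rfl⟩
  exact h _ _ (by omega) (by omega) (by omega) x hx y hy

lemma mul_mem_npow {X : Submodule K A} {a b : ℕ} (ha : 0 < a) (hb : 0 < b) {x y : A}
    (hx : x ∈ npow X a) (hy : y ∈ npow X b) : x * y ∈ npow X (a + b) := by
  obtain ⟨i, rfl⟩ : ∃ i, a = i + 1 := ⟨a - 1, by omega⟩
  obtain ⟨n, hn⟩ : ∃ n, i + 1 + b = n + 2 := ⟨i + b - 1, by omega⟩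
  rw [hn, npow]
  refine le_iSup (fun j : Fin (n + 1) => smulSub (npow X (j.1 + 1)) (npow X (n + 1 - j.1)))
    ⟨i, by omega⟩ (subset_span ⟨x, hx, y, ?_, rfl⟩)
  rwa [show n + 1 - i = b by omega]

lemma npow_le_of_le_ideal {X J : Submodule K A} (hJ : IsIdeal J) (hXJ : X ≤ J) :
    ∀ k, npow X k ≤ J
  | 0 => by simp [npow_zero_eq_bot]
  | 1 => by rwa [npow_one_eq_self]
  | n + 2 => npow_add_two_le fun a _ _ _ _ x hx y _ =>
      (hJ x (npow_le_of_le_ideal hJ hXJ a hx) y).1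

end Powers

section NaturalBasis

variable {K : Type*} [Field K] {A : Type*} [NonUnitalNonAssocRing A]
  [Module K A] [IsScalarTower K A A] {ι : Type*} {B : Module.Basis ι K A}

lemma IsNaturalBasis.mul_comm_s13 [SMulCommClass K A A] (hB : IsNaturalBasis B) (x y : A) :
    x * y = y * x := by
  have h : LinearMap.mul K A = (LinearMap.mul K A).flip := by
    refine B.ext fun i => B.ext fun j => ?_
    rcases eq_or_ne i j with rfl | hij
    · rfl
    · simp only [LinearMap.mul_apply', LinearMap.flip_apply, hB i j hij, hB j i hij.symm]
  exact LinearMap.congr_fun₂ h x y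

lemma IsNaturalBasis.mul_eq_zero_of_mem_span (hB : IsNaturalBasis B) {Λ' : Set ι} {x : A}
    (hx : x ∈ span K (B '' Λ')) {k : ι} (hk : k ∉ Λ') : x * B k = 0 := by
  induction hx using span_induction with
  | mem _ hb =>
    obtain ⟨j, hj, rfl⟩ := hb
    exact hB j k fun h => hk (h ▸ hj)
  | zero => rw [zero_mul]
  | add y z _ _ hy hz => rw [add_mul, hy, hz, add_zero]
  | smul c y _ hy => rw [smul_mul_assoc, hy, smul_zero]

lemma IsNaturalBasis.mem_of_hasAbsorption [SMulCommClass K A A] (hB : IsNaturalBasis B)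
    {Λ' : Set ι} {J : Submodule K A} (hJ : HasAbsorption J) {x : A} (hx : x ∈ span K (B '' Λ'))
    (h : ∀ y ∈ span K (B '' Λ'), x * y ∈ J) : x ∈ J := by
  refine hJ x fun a => ?_
  have ha : a ∈ span K (Set.range B) := B.span_eq ▸ mem_top
  induction ha using span_induction with
  | mem _ hb =>
    obtain ⟨k, rfl⟩ := hb
    by_cases hk : k ∈ Λ'
    · exact h _ (subset_span ⟨k, hk, rfl⟩)
    · rw [hB.mul_eq_zero_of_mem_span hx hk]
      exact zero_mem J
  | zero => rw [mul_zero]; exact zero_mem J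
  | add y z _ _ hy hz => rw [mul_add]; exact add_mem hy hz
  | smul c y _ hy => rw [mul_smul_comm]; exact smul_mem J c hy

lemma IsNaturalBasis.npow_le_of_npow_succ_le [SMulCommClass K A A] (hB : IsNaturalBasis B)
    {Λ' : Set ι} (hI : IsIdeal (span K (B '' Λ'))) {J : Submodule K A}
    (hJ : HasAbsorption J) {n : ℕ} (hn : 0 < n) (h : npow (span K (B '' Λ')) (n + 1) ≤ J) :
    npow (span K (B '' Λ')) n ≤ J := fun x hx =>
  hB.mem_of_hasAbsorption hJ (npow_le_of_le_ideal hI le_rfl n hx) fun y hy =>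
    h (mul_mem_npow hn one_pos hx (by rwa [npow_one_eq_self]))

lemma IsNaturalBasis.le_of_npow_le [SMulCommClass K A A] (hB : IsNaturalBasis B)
    {Λ' : Set ι} (hI : IsIdeal (span K (B '' Λ'))) {J : Submodule K A}
    (hJ : HasAbsorption J) : ∀ n, npow (span K (B '' Λ')) (n + 1) ≤ J → span K (B '' Λ') ≤ J
  | 0, h => by rwa [npow_one_eq_self] at h
  | n + 1, h => hB.le_of_npow_le hI hJ n (hB.npow_le_of_npow_succ_le hI hJ n.succ_pos h)

end NaturalBasis

section AnnihilatingSeries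

variable {K : Type*} [Field K] {A : Type*} [NonUnitalNonAssocRing A]
  [Module K A] [SMulCommClass K A A] [IsScalarTower K A A]

lemma annSeries_le_succ : ∀ n, annSeries K A n ≤ annSeries K A (n + 1)
  | 0 => by rw [annSeries]; exact bot_le
  | n + 1 => fun _ hx a => ⟨annSeries_le_succ n (hx a).1, annSeries_le_succ n (hx a).2⟩

lemma annSeries_isIdeal : ∀ n, IsIdeal (annSeries K A n)
  | 0 => by
    intro x hx a
    rw [annSeries, mem_bot] at hx ⊢
    simp [hx]
  | n + 1 => fun _ hx a => ⟨annSeries_le_succ n (hx a).1, annSeries_le_succ n (hx a).2⟩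

lemma exists_annSeries_eq_succ [IsNoetherian K A] :
    ∃ q, annSeries K A q = annSeries K A (q + 1) := by
  obtain ⟨q, hq⟩ := monotone_stabilizes_iff_noetherian.mpr ‹IsNoetherian K A›
    ⟨annSeries K A, monotone_nat_of_le_succ annSeries_le_succ⟩
  exact ⟨q, hq (q + 1) q.le_succ⟩

lemma rad_le_annSeries (hcomm : ∀ x y : A, x * y = y * x) {q : ℕ}
    (hq : annSeries K A q = annSeries K A (q + 1)) : rad K A ≤ annSeries K A q := by
  refine sInf_le ⟨annSeries_isIdeal q, fun x hx => ?_⟩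
  rw [hq]
  exact fun a => ⟨hx a, hcomm a x ▸ hx a⟩

lemma npow_le_annSeries {X : Submodule K A} :
    ∀ j m, X ≤ annSeries K A (m + j) → ∀ k, 2 ^ j ≤ k → npow X k ≤ annSeries K A m
  | 0, m, hX, k, _ => npow_le_of_le_ideal (annSeries_isIdeal m) hX k
  | j + 1, m, hX, k, hk => by
    have hX' : X ≤ annSeries K A (m + 1 + j) := by rwa [Nat.add_right_comm]
    obtain ⟨n, rfl⟩ : ∃ n, k = n + 2 := by
      have := j.one_le_two_pow
      exact ⟨k - 2, by rw [pow_succ] at hk; omega⟩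
    refine npow_add_two_le fun a b _ _ hab x hx y hy => ?_
    rcases le_or_gt (2 ^ j) a with ha | ha
    · exact (npow_le_annSeries j (m + 1) hX' a ha hx y).1
    · exact (npow_le_annSeries j (m + 1) hX' b (by rw [pow_succ] at hk; omega) hy x).2

lemma npow_eq_bot_of_le_annSeries {X : Submodule K A} {q : ℕ} (hX : X ≤ annSeries K A q) :
    npow X (2 ^ q) = ⊥ := by
  have h := npow_le_annSeries q 0 (by rwa [zero_add] : X ≤ annSeries K A (0 + q)) (2 ^ q) le_rfl
  rwa [annSeries, le_bot_iff] at h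

end AnnihilatingSeries

theorem stmt13_general {K : Type*} [Field K] {A : Type*} [NonUnitalNonAssocRing A]
    [Module K A] [SMulCommClass K A A] [IsScalarTower K A A]
    {ι : Type*} [Fintype ι]
    (I : Submodule K A) (hI : IsIdeal I)
    (hext : ∃ B : Module.Basis ι K A, IsNaturalBasis B ∧
      ∃ Λ' : Set ι, I = Submodule.span K (B '' Λ')) :
    (∃ k : ℕ, 0 < k ∧ npow I k = ⊥) ↔ I ≤ rad K A := by
  obtain ⟨B, hB, Λ', rfl⟩ := hext
  constructor
  · rintro ⟨k, hk, hnil⟩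
    obtain ⟨n, rfl⟩ := Nat.exists_eq_add_one_of_ne_zero hk.ne'
    exact le_sInf fun J hJ => hB.le_of_npow_le hI hJ.2 n (hnil ▸ bot_le)
  · intro hle
    have : Module.Finite K A := Module.Finite.of_basis B
    obtain ⟨q, hq⟩ := exists_annSeries_eq_succ (K := K) (A := A)
    exact ⟨2 ^ q, by positivity,
      npow_eq_bot_of_le_annSeries (hle.trans (rad_le_annSeries hB.mul_comm_s13 hq))⟩

/-- An ideal with the extension property is nilpotent iff it is contained in
the absorption radical. -/
theorem stmt13 {K : Type*} [Field K] {A : Type*} [NonUnitalNonAssocRing A]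
    [Module K A] [SMulCommClass K A A] [IsScalarTower K A A]
    {ι : Type*} [Fintype ι] (B₀ : Module.Basis ι K A) (hB₀ : IsNaturalBasis B₀)
    (I : Submodule K A) (hI : IsIdeal I)
    (hext : ∃ B : Module.Basis ι K A, IsNaturalBasis B ∧
      ∃ Λ' : Set ι, I = Submodule.span K (B '' Λ')) :
    (∃ k : ℕ, 0 < k ∧ npow I k = ⊥) ↔ I ≤ rad K A :=
  stmt13_general I hI hext
end
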